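/- Let k, ℓ ≥ 1 be integers. The set {k·(s,s²,s³) + ℓ·(t,t²,t³) : −1 ≤ s ≤ t ≤ 1} ⊆ ℝ³ is equal to the set of all points (x,y,z) ∈ [−(k+ℓ), k+ℓ] × [0, k+ℓ] × [−(k+ℓ), k+ℓ] satisfying f_{kℓ}(x,y,z) = 0, the inequalities 0 ≤ kℓ·D_{kℓ}(x,y) ≤ min{k²(k+ℓ+x)², ℓ²(k+ℓ−x)²}, and in addition: z ≤ −B_{kℓ}(x,y)/(2A_{kℓ}) if k < ℓ; z = −B_{kℓ}(x,y)/(2A_{kℓ}) if k = ℓ; and z ≥ −B_{kℓ}(x,y)/(2A_{kℓ}) if k > ℓ. -/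

import Mathlib

noncomputable def Akl (k l : ℕ) : ℝ := k * l * (k + l) ^ 2

noncomputable def Bkl (k l : ℕ) (x y : ℝ) : ℝ := 2 * k * l * x * (2 * x ^ 2 - 3 * (k + l) * y)

noncomputable def Ckl (k l : ℕ) (x y : ℝ) : ℝ :=
  x ^ 6 - 3 * (k + l) * x ^ 4 * y + 3 * ((k : ℝ) ^ 2 + k * l + l ^ 2) * x ^ 2 * y ^ 2
    - ((k : ℝ) - l) ^ 2 * (k + l) * y ^ 3

noncomputable def fkl (k l : ℕ) (x y z : ℝ) : ℝ :=
  Akl k l * z ^ 2 + Bkl k l x y * z + Ckl k l x y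

noncomputable def Dkl (k l : ℕ) (x y : ℝ) : ℝ := (k + l) * y - x ^ 2

/-!
Write `x = k s + l t`, `y = k s² + l t²`, `z = k s³ + l t³` and `w = t - s`. Then `D = k l w²`,
so `(x, y)` determines `s ≤ t`, and since `k + l + x = (k + l)(s + 1) + l w` and
`k + l - x = (k + l)(1 - t) + k w`, the upper bounds on `k l D` say exactly `-1 ≤ s` and `t ≤ 1`.
Eliminating `s, t` gives `f(x, y, z) = 0`, and `2 A z + B = 2 k² l² (k - l) w³`: the two roots of
the quadratic `f(x, y, ·)` lie on opposite sides of `-B / 2A`, and the sign of `k - l` says on which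
side the parametrised one lies.
-/

section Parametrisation

variable (k l : ℕ) (s t : ℝ)

lemma fkl_param :
    fkl k l (k * s + l * t) (k * s ^ 2 + l * t ^ 2) (k * s ^ 3 + l * t ^ 3) = 0 := by
  unfold fkl Akl Bkl Ckl; ring

lemma Dkl_param : Dkl k l (k * s + l * t) (k * s ^ 2 + l * t ^ 2) = k * l * (t - s) ^ 2 := by
  unfold Dkl; ring

lemma two_mul_Akl_mul_add_Bkl_param :
    2 * Akl k l * (k * s ^ 3 + l * t ^ 3) + Bkl k l (k * s + l * t) (k * s ^ 2 + l * t ^ 2) =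
      2 * k ^ 2 * l ^ 2 * (k - l) * (t - s) ^ 3 := by
  unfold Akl Bkl; ring

variable {k l s t}

lemma mul_Dkl_param_le_left_iff (hk : 0 < k) (hl : 0 < l) (hst : s ≤ t)
    (hx : 0 ≤ k + l + (k * s + l * t)) :
    k * l * Dkl k l (k * s + l * t) (k * s ^ 2 + l * t ^ 2) ≤
        k ^ 2 * (k + l + (k * s + l * t)) ^ 2 ↔
      -1 ≤ s := by
  have hsplit : (k + l + (k * s + l * t) : ℝ) = l * (t - s) + (k + l) * (s + 1) := by ring
  rw [hsplit] at hx ⊢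
  rw [Dkl_param, show (k * l * (k * l * (t - s) ^ 2) : ℝ) = (k * (l * (t - s))) ^ 2 by ring,
    ← mul_pow, pow_le_pow_iff_left₀ (by have := sub_nonneg.2 hst; positivity)
      (mul_nonneg k.cast_nonneg hx) two_ne_zero,
    mul_le_mul_iff_right₀ (by positivity), le_add_iff_nonneg_right,
    mul_nonneg_iff_of_pos_left (by positivity), neg_le_iff_add_nonneg.symm]

lemma mul_Dkl_param_le_right_iff (hk : 0 < k) (hl : 0 < l) (hst : s ≤ t)
    (hx : 0 ≤ k + l - (k * s + l * t)) :
    k * l * Dkl k l (k * s + l * t) (k * s ^ 2 + l * t ^ 2) ≤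
        l ^ 2 * (k + l - (k * s + l * t)) ^ 2 ↔
      t ≤ 1 := by
  have hsplit : (k + l - (k * s + l * t) : ℝ) = k * (t - s) + (k + l) * (1 - t) := by ring
  rw [hsplit] at hx ⊢
  rw [Dkl_param, show (k * l * (k * l * (t - s) ^ 2) : ℝ) = (l * (k * (t - s))) ^ 2 by ring,
    ← mul_pow, pow_le_pow_iff_left₀ (by have := sub_nonneg.2 hst; positivity)
      (mul_nonneg l.cast_nonneg hx) two_ne_zero,
    mul_le_mul_iff_right₀ (by positivity), le_add_iff_nonneg_right,
    mul_nonneg_iff_of_pos_left (by positivity), sub_nonneg]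

lemma exists_param_of_Dkl_nonneg {x y : ℝ} (hk : 0 < k) (hl : 0 < l) (hD : 0 ≤ Dkl k l x y) :
    ∃ s t : ℝ, s ≤ t ∧ x = k * s + l * t ∧ y = k * s ^ 2 + l * t ^ 2 := by
  set w := √(Dkl k l x y / (k * l))
  have hw : k * l * w ^ 2 = (k + l) * y - x ^ 2 := by
    rw [Real.sq_sqrt (by positivity), mul_div_cancel₀ _ (by positivity)]; rfl
  have hn : (k + l : ℝ) ≠ 0 := by positivity
  refine ⟨(x - l * w) / (k + l), (x + k * w) / (k + l), ?_, ?_, ?_⟩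
  · have hw₀ : 0 ≤ w := Real.sqrt_nonneg _
    gcongr
    nlinarith
  · field_simp; ring
  · field_simp; linear_combination -(k + l : ℝ) * hw

end Parametrisation

lemma abs_mul_pow_add_mul_pow_le {a b s t : ℝ} (ha : 0 ≤ a) (hb : 0 ≤ b) (hs : |s| ≤ 1)
    (ht : |t| ≤ 1) (n : ℕ) : |a * s ^ n + b * t ^ n| ≤ a + b := by
  have hsn : |s| ^ n ≤ 1 := pow_le_one₀ (abs_nonneg s) hs
  have htn : |t| ^ n ≤ 1 := pow_le_one₀ (abs_nonneg t) ht
  calc |a * s ^ n + b * t ^ n| ≤ a * |s| ^ n + b * |t| ^ n := by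
        simpa [abs_mul, abs_pow, abs_of_nonneg ha, abs_of_nonneg hb] using
          abs_add_le (a * s ^ n) (b * t ^ n)
    _ ≤ a + b := by nlinarith

lemma eq_of_quadratic_roots_of_deriv_mul_nonneg {a b c z z' : ℝ} (ha : a ≠ 0)
    (hz : a * z ^ 2 + b * z + c = 0) (hz' : a * z' ^ 2 + b * z' + c = 0)
    (h : 0 ≤ (2 * a * z + b) * (2 * a * z' + b)) : z = z' := by
  have hsq : (2 * a * z + b) ^ 2 = (2 * a * z' + b) ^ 2 := by
    linear_combination 4 * a * (hz - hz')
  have hderiv : 2 * a * z + b = 2 * a * z' + b := by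
    rcases sq_eq_sq_iff_eq_or_eq_neg.1 hsq with h' | h'
    · exact h'
    · nlinarith
  exact mul_left_cancel₀ (mul_ne_zero two_ne_zero ha) (by linarith)

def BranchCondition (k l : ℕ) (x y z : ℝ) : Prop :=
  (k < l → z ≤ -Bkl k l x y / (2 * Akl k l)) ∧
    (k = l → z = -Bkl k l x y / (2 * Akl k l)) ∧
    (l < k → -Bkl k l x y / (2 * Akl k l) ≤ z)

section Branch

variable {k l : ℕ}

lemma Akl_pos (hk : 0 < k) (hl : 0 < l) : 0 < Akl k l := by
  unfold Akl; positivity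

lemma branchCondition_iff (hk : 0 < k) (hl : 0 < l) {x y z : ℝ} :
    BranchCondition k l x y z ↔
      (k < l → 2 * Akl k l * z + Bkl k l x y ≤ 0) ∧
        (k = l → 2 * Akl k l * z + Bkl k l x y = 0) ∧
        (l < k → 0 ≤ 2 * Akl k l * z + Bkl k l x y) := by
  have hA : 0 < 2 * Akl k l := by have := Akl_pos hk hl; positivity
  unfold BranchCondition
  rw [le_div_iff₀ hA, eq_div_iff hA.ne', div_le_iff₀ hA]
  constructor <;> rintro ⟨h₁, h₂, h₃⟩ <;>
    exact ⟨fun h => by linarith [h₁ h], fun h => by linarith [h₂ h], fun h => by linarith [h₃ h]⟩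

lemma branchCondition_param (hk : 0 < k) (hl : 0 < l) {s t : ℝ} (hst : s ≤ t) :
    BranchCondition k l (k * s + l * t) (k * s ^ 2 + l * t ^ 2) (k * s ^ 3 + l * t ^ 3) := by
  have hw : 0 ≤ (t - s) ^ 3 := pow_nonneg (sub_nonneg.2 hst) 3
  rw [branchCondition_iff hk hl, two_mul_Akl_mul_add_Bkl_param]
  refine ⟨fun h => ?_, fun h => by simp [h], fun h => ?_⟩
  · have hkl : (k : ℝ) - l ≤ 0 := sub_nonpos.2 (by exact_mod_cast h.le)
    exact mul_nonpos_of_nonpos_of_nonneg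
      (mul_nonpos_of_nonneg_of_nonpos (by positivity) hkl) hw
  · have hkl : (0 : ℝ) ≤ k - l := sub_nonneg.2 (by exact_mod_cast h.le)
    positivity

lemma mul_nonneg_of_branchCondition (hk : 0 < k) (hl : 0 < l) {x y z z' : ℝ}
    (h : BranchCondition k l x y z) (h' : BranchCondition k l x y z') :
    0 ≤ (2 * Akl k l * z + Bkl k l x y) * (2 * Akl k l * z' + Bkl k l x y) := by
  rw [branchCondition_iff hk hl] at h h'
  rcases lt_trichotomy k l with hkl | hkl | hkl
  · exact mul_nonneg_of_nonpos_of_nonpos (h.1 hkl) (h'.1 hkl)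
  · simp [h.2.1 hkl]
  · exact mul_nonneg (h.2.2 hkl) (h'.2.2 hkl)

end Branch

theorem kC_plus_ellC_description (k l : ℕ) (hk : 1 ≤ k) (hl : 1 ≤ l) :
    {p : ℝ × ℝ × ℝ | ∃ s t : ℝ, -1 ≤ s ∧ s ≤ t ∧ t ≤ 1 ∧
        p = ((k : ℝ) * s + l * t, (k : ℝ) * s ^ 2 + l * t ^ 2, (k : ℝ) * s ^ 3 + l * t ^ 3)} =
    {p : ℝ × ℝ × ℝ |
      p.1 ∈ Set.Icc (-((k : ℝ) + l)) ((k : ℝ) + l) ∧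
      p.2.1 ∈ Set.Icc (0 : ℝ) ((k : ℝ) + l) ∧
      p.2.2 ∈ Set.Icc (-((k : ℝ) + l)) ((k : ℝ) + l) ∧
      fkl k l p.1 p.2.1 p.2.2 = 0 ∧
      0 ≤ (k : ℝ) * l * Dkl k l p.1 p.2.1 ∧
      (k : ℝ) * l * Dkl k l p.1 p.2.1 ≤
        min ((k : ℝ) ^ 2 * ((k : ℝ) + l + p.1) ^ 2) ((l : ℝ) ^ 2 * ((k : ℝ) + l - p.1) ^ 2) ∧
      (k < l → p.2.2 ≤ -Bkl k l p.1 p.2.1 / (2 * Akl k l)) ∧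
      (k = l → p.2.2 = -Bkl k l p.1 p.2.1 / (2 * Akl k l)) ∧
      (l < k → -Bkl k l p.1 p.2.1 / (2 * Akl k l) ≤ p.2.2)} := by
  ext ⟨x, y, z⟩
  constructor
  · rintro ⟨s, t, hs, hst, ht, ⟨⟩⟩
    have hs' : |s| ≤ 1 := abs_le.2 ⟨hs, hst.trans ht⟩
    have ht' : |t| ≤ 1 := abs_le.2 ⟨hs.trans hst, ht⟩
    have bound := abs_mul_pow_add_mul_pow_le (Nat.cast_nonneg' k) (Nat.cast_nonneg' l) hs' ht'
    have hx := abs_le.1 (by simpa using bound 1)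
    refine ⟨hx, ⟨by positivity, (le_abs_self _).trans (bound 2)⟩, abs_le.1 (bound 3),
      fkl_param k l s t, by rw [Dkl_param]; positivity,
      le_min ((mul_Dkl_param_le_left_iff hk hl hst (by linarith)).2 hs)
        ((mul_Dkl_param_le_right_iff hk hl hst (by linarith)).2 ht),
      branchCondition_param hk hl hst⟩
  · rintro ⟨hx, -, -, hf, hD₀, hD, hbranch⟩
    obtain ⟨s, t, hst, rfl, rfl⟩ :=
      exists_param_of_Dkl_nonneg hk hl (nonneg_of_mul_nonneg_right hD₀ (by positivity))
    have hs : -1 ≤ s := (mul_Dkl_param_le_left_iff hk hl hst (by linarith [hx.1])).1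
      (hD.trans (min_le_left _ _))
    have ht : t ≤ 1 := (mul_Dkl_param_le_right_iff hk hl hst (by linarith [hx.2])).1
      (hD.trans (min_le_right _ _))
    have hz : z = k * s ^ 3 + l * t ^ 3 :=
      eq_of_quadratic_roots_of_deriv_mul_nonneg (Akl_pos hk hl).ne' hf (fkl_param k l s t)
        (mul_nonneg_of_branchCondition hk hl hbranch (branchCondition_param hk hl hst))
    exact ⟨s, t, hs, hst, ht, by rw [hz]⟩
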